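/- arXiv:1101.4193 — 3 statements merged into one kernel-verified Lean document; each statement's English description precedes it below -/
import Mathlib

section
/- For any two events e, e' in a distributed computation, e happens-before e' if and only if the vector clock of e is strictly less than the vector clock of e' (componentwise ≤ with at least one strict inequality). -/
/-- A distributed computation on `n` processes: each process `p` executes a
finite sequence of `len p` events; `src p k = some (q, m)` means the `k`-th
event of process `p` is a receive whose (unique) matching send is the `m`-th
event of process `q`; `src p k = none` means it is internal or a send. -/
structure Comp (n : ℕ) where
  len : Fin n → ℕ
  src : Fin n → ℕ → Option (Fin n × ℕ)

namespace Comp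

variable {n : ℕ}

/-- `e` is an actual event of the computation. -/
def Valid (c : Comp n) (e : Fin n × ℕ) : Prop := e.2 < c.len e.1

/-- Every receive is matched to a valid send on a different process. -/
def Matched (c : Comp n) : Prop :=
  ∀ p k q m, c.src p k = some (q, m) → q ≠ p ∧ c.Valid (q, m)

/-- One-step causality: program order on a process, or a send-receive edge. -/
def Step (c : Comp n) (e e' : Fin n × ℕ) : Prop :=
  (e.1 = e'.1 ∧ e.2 < e'.2) ∨ c.src e'.1 e'.2 = some e

/-- Happens-before: the smallest transitive relation containing program
order and the send-receive pairs. -/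
def hb (c : Comp n) : Fin n × ℕ → Fin n × ℕ → Prop :=
  Relation.TransGen c.Step

/-- `V` is the vector clock of the computation: process `p` increments its own
component at each of its events, and a receive takes the componentwise max of
the local clock and the sender's clock. -/
def IsVC (c : Comp n) (V : Fin n × ℕ → Fin n → ℕ) : Prop :=
  (∀ p k, V (p, k) p = k + 1) ∧
  (∀ p k j, j ≠ p → c.src p k = none →
      V (p, k) j = if k = 0 then 0 else V (p, k - 1) j) ∧
  (∀ p k j q m, j ≠ p → c.src p k = some (q, m) →
      V (p, k) j = max (if k = 0 then 0 else V (p, k - 1) j) (V (q, m) j))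

end Comp

/-! Along a step of causality the clock grows componentwise: at a receive, the receiver's own
entry dominates the sender's, since otherwise the receive would precede its own send.
Conversely, an entry `V f j = t + 1` is copied along steps from the event `(j, t)`, which
therefore precedes or equals `f`; hence `V e e.1 ≤ V e' e.1` alone forces `e` to precede or equal
`e'`. Both arguments are inductions along steps, which are well founded because they are acyclic
and every event has only finitely many predecessors. -/

open Relation

theorem Relation.acc_of_finite_transGen {α : Type*} {r : α → α → Prop}
    (hirr : ∀ a, ¬ TransGen r a a) {a : α} (hfin : {b | TransGen r b a}.Finite) : Acc r a := by
  have : IsStrictOrder α (TransGen r) :=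
    { irrefl := hirr, trans := fun _ _ _ => TransGen.trans }
  exact (Set.WellFoundedOn.acc_iff_wellFoundedOn.out 2 0).1
    ((hfin.wellFoundedOn (r := TransGen r)).mono (fun _ _ => TransGen.single) subset_rfl)

namespace Comp

variable {n : ℕ} {c : Comp n}

theorem Step.snd_lt_max (hM : c.Matched) {e e' : Fin n × ℕ} (h : c.Step e e') :
    e.2 < max e'.2 (Finset.univ.sup c.len) := by
  rcases h with ⟨-, hlt⟩ | hsrc
  · exact lt_max_of_lt_left hlt
  · exact lt_max_of_lt_right <|
      (hM _ _ _ _ hsrc).2.trans_le (Finset.le_sup (Finset.mem_univ e.1))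

theorem hb.snd_lt_max (hM : c.Matched) {e e' : Fin n × ℕ} (h : c.hb e e') :
    e.2 < max e'.2 (Finset.univ.sup c.len) := by
  induction h with
  | single h => exact h.snd_lt_max hM
  | tail _ h ih => exact ih.trans_le (max_le (h.snd_lt_max hM).le (le_max_right _ _))

theorem wellFounded_step (hM : c.Matched) (hacyclic : ∀ e, ¬ c.hb e e) :
    WellFounded c.Step := by
  refine ⟨fun e => acc_of_finite_transGen hacyclic ?_⟩
  have hfin :=
    (Set.finite_univ (α := Fin n)).prod (Set.finite_Iio (max e.2 (Finset.univ.sup c.len)))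
  exact hfin.subset fun b hbe => ⟨Set.mem_univ b.1, hb.snd_lt_max hM hbe⟩

theorem reflTransGen_step_of_le (p : Fin n) {k k' : ℕ} (h : k ≤ k') :
    ReflTransGen c.Step (p, k) (p, k') := by
  obtain rfl | hlt := h.eq_or_lt
  · rfl
  · exact .single (Or.inl ⟨rfl, hlt⟩)

namespace IsVC

variable {V : Fin n × ℕ → Fin n → ℕ}

theorem exists_step_eq_of_ne_zero (hV : c.IsVC V) {p j : Fin n} {k : ℕ} (hj : j ≠ p)
    (hpos : V (p, k) j ≠ 0) : ∃ g, c.Step g (p, k) ∧ V g j = V (p, k) j := by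
  have prev (hk : k ≠ 0) : c.Step (p, k - 1) (p, k) := Or.inl ⟨rfl, by omega⟩
  cases hsrc : c.src p k with
  | none =>
    rw [hV.2.1 p k j hj hsrc] at hpos ⊢
    split_ifs at hpos ⊢ with hk
    · exact absurd rfl hpos
    · exact ⟨_, prev hk, rfl⟩
  | some s =>
    rw [hV.2.2 p k j s.1 s.2 hj hsrc] at hpos ⊢
    rcases max_choice (if k = 0 then 0 else V (p, k - 1) j) (V s j) with h | h <;>
      rw [h] at hpos ⊢
    · split_ifs at hpos ⊢ with hk
      · exact absurd rfl hpos
      · exact ⟨_, prev hk, rfl⟩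
    · exact ⟨s, Or.inr hsrc, rfl⟩

theorem reflTransGen_of_eq_succ (hV : c.IsVC V) (hwf : WellFounded c.Step)
    (f : Fin n × ℕ) {j : Fin n} {t : ℕ} (ht : V f j = t + 1) :
    ReflTransGen c.Step (j, t) f := by
  induction f using hwf.induction generalizing t with
  | _ f ih =>
    obtain ⟨p, k⟩ := f
    by_cases hj : j = p
    · subst hj
      obtain rfl : k = t := by simpa [hV.1] using ht
      rfl
    · obtain ⟨g, hg, hgj⟩ := hV.exists_step_eq_of_ne_zero hj (by rw [ht]; exact t.succ_ne_zero)
      exact (ih g hg (hgj.trans ht)).tail hg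

theorem reflTransGen_of_own_le (hV : c.IsVC V) (hwf : WellFounded c.Step)
    {e e' : Fin n × ℕ} (h : V e e.1 ≤ V e' e.1) : ReflTransGen c.Step e e' := by
  obtain ⟨p, k⟩ := e
  dsimp only at h
  rw [hV.1] at h
  have ht : V e' p = (V e' p - 1) + 1 := by omega
  exact (reflTransGen_step_of_le p (by omega)).trans (hV.reflTransGen_of_eq_succ hwf e' ht)

theorem le_succ (hV : c.IsVC V) (p : Fin n) (k : ℕ) : V (p, k) ≤ V (p, k + 1) := by
  intro j
  by_cases hj : j = p
  · subst hj
    simp only [hV.1, Nat.le_succ]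
  cases hsrc : c.src p (k + 1) with
  | none => simp [hV.2.1 p (k + 1) j hj hsrc]
  | some s => simp [hV.2.2 p (k + 1) j s.1 s.2 hj hsrc]

theorem le_of_step (hV : c.IsVC V) (hwf : WellFounded c.Step) (hacyclic : ∀ e, ¬ c.hb e e)
    {e e' : Fin n × ℕ} (h : c.Step e e') : V e ≤ V e' := by
  obtain ⟨p, k⟩ := e'
  rcases h with ⟨rfl, hlt⟩ | hsrc
  · exact monotone_nat_of_le_succ (hV.le_succ e.1) hlt.le
  intro j
  by_cases hj : j = p
  · subst hj
    -- otherwise the receive would happen before its own send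
    refine (le_total _ _).resolve_right fun hle => hacyclic (j, k) ?_
    exact TransGen.tail' (hV.reflTransGen_of_own_le hwf hle) (Or.inr hsrc)
  · rw [hV.2.2 p k j _ _ hj hsrc]
    exact le_max_right _ _

theorem hb_iff_lt (hV : c.IsVC V) (hwf : WellFounded c.Step) (hacyclic : ∀ e, ¬ c.hb e e)
    {e e' : Fin n × ℕ} : c.hb e e' ↔ V e < V e' := by
  constructor
  · intro h
    have hle : V e ≤ V e' := by
      induction h with
      | single h => exact hV.le_of_step hwf hacyclic h
      | tail _ h ih => exact ih.trans (hV.le_of_step hwf hacyclic h)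
    exact hle.lt_of_not_ge fun hge =>
      hacyclic e (h.trans_left (hV.reflTransGen_of_own_le hwf (hge e'.1)))
  · intro h
    have hle := hV.reflTransGen_of_own_le hwf (h.le e.1)
    exact (reflTransGen_iff_eq_or_transGen.1 hle).resolve_left fun h' => h.ne (by rw [h'])

end IsVC

end Comp

theorem hb_iff_vectorClock_lt_general {n : ℕ} (c : Comp n) (V : Fin n × ℕ → Fin n → ℕ)
    (hV : c.IsVC V) (hM : c.Matched) (hacyclic : ∀ e, ¬ c.hb e e)
    (e e' : Fin n × ℕ) :
    c.hb e e' ↔ ((∀ i, V e i ≤ V e' i) ∧ V e ≠ V e') :=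
  (hV.hb_iff_lt (c.wellFounded_step hM hacyclic) hacyclic).trans lt_iff_le_and_ne

/-- **Mattern's theorem**: `e` happens-before `e'` iff the vector clock of `e`
is strictly less than the vector clock of `e'` (componentwise `≤` together
with inequality). -/
theorem hb_iff_vectorClock_lt {n : ℕ} (c : Comp n) (V : Fin n × ℕ → Fin n → ℕ)
    (hV : c.IsVC V) (hM : c.Matched) (hacyclic : ∀ e, ¬ c.hb e e)
    (e e' : Fin n × ℕ) (he : c.Valid e) (he' : c.Valid e') :
    c.hb e e' ↔ ((∀ i, V e i ≤ V e' i) ∧ V e ≠ V e') :=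
  hb_iff_vectorClock_lt_general c V hV hM hacyclic e e'
end

section
/- The componentwise max operation on ℕ^n is associative, commutative, idempotent, and monotone in each argument; consequently the vector clock of any event is the componentwise max of the unit contribution vectors of all events in its causal past. -/
/-!
Happens-before is a strict order on the finitely many events, so one may argue by well-founded
induction on the causal past. For `j ≠ p`, the past of `(p, k)` consists of `(p, k)` itself
(contributing `0` in component `j`), the past of its predecessor `(p, k - 1)` and, for a receive,
the past of the matching send; the clock rule takes exactly the max of the clocks of these two
events. In its own component the clock is `k + 1`, and no event `(p, m)` with `m > k` lies in the
past of `(p, k)` by acyclicity.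
-/

open Relation (ReflTransGen TransGen)

namespace Comp

variable {n : ℕ} {c : Comp n}

def contribution (e : Fin n × ℕ) : Fin n → ℕ := Pi.single e.1 (e.2 + 1)

def past (c : Comp n) (e : Fin n × ℕ) : Set (Fin n × ℕ) :=
  {f | c.Valid f ∧ ReflTransGen c.Step f e}

lemma finite_setOf_valid (c : Comp n) : {e | c.Valid e}.Finite := by
  refine (Set.finite_univ.prod (Set.finite_Iio (Finset.univ.sup c.len))).subset ?_
  rintro ⟨p, k⟩ hk
  exact ⟨Set.mem_univ p, Set.mem_Iio.mpr
    (lt_of_lt_of_le (hk : k < c.len p) (Finset.le_sup (Finset.mem_univ p)))⟩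

lemma wellFoundedOn_hb (hirr : ∀ e, ¬ c.hb e e) : {e | c.Valid e}.WellFoundedOn c.hb :=
  have : IsStrictOrder (Fin n × ℕ) c.hb :=
    { irrefl := hirr, trans := fun _ _ _ => TransGen.trans }
  c.finite_setOf_valid.wellFoundedOn

lemma Valid.pred {p : Fin n} {k : ℕ} (he : c.Valid (p, k)) : c.Valid (p, k - 1) :=
  lt_of_le_of_lt (Nat.sub_le k 1) he

lemma hb_pred {p : Fin n} {k : ℕ} (hk : 0 < k) : c.hb (p, k - 1) (p, k) :=
  TransGen.single (Or.inl ⟨rfl, Nat.sub_lt hk one_pos⟩)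

lemma hb_of_src {p : Fin n} {k : ℕ} {s : Fin n × ℕ} (hs : c.src p k = some s) : c.hb s (p, k) :=
  TransGen.single (Or.inr hs)

lemma reflTransGen_step_pred {p : Fin n} {i k : ℕ} (h : i < k) :
    ReflTransGen c.Step (p, i) (p, k - 1) := by
  rcases (Nat.le_sub_one_of_lt h).eq_or_lt with rfl | hlt
  · exact ReflTransGen.refl
  · exact ReflTransGen.single (Or.inl ⟨rfl, hlt⟩)

lemma reflTransGen_step_cases {f : Fin n × ℕ} {p : Fin n} {k : ℕ}
    (h : ReflTransGen c.Step f (p, k)) :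
    f = (p, k) ∨ (0 < k ∧ ReflTransGen c.Step f (p, k - 1)) ∨
      ∃ s, c.src p k = some s ∧ ReflTransGen c.Step f s := by
  rcases (ReflTransGen.cases_tail_iff _ _ _).mp h with rfl | ⟨⟨q, i⟩, hf, hstep⟩
  · exact Or.inl rfl
  rcases hstep with ⟨rfl, hik⟩ | hs
  · exact Or.inr (Or.inl ⟨by omega, hf.trans (reflTransGen_step_pred hik)⟩)
  · exact Or.inr (Or.inr ⟨_, hs, hf⟩)

lemma le_of_reflTransGen_step (hirr : ∀ e, ¬ c.hb e e) {p : Fin n} {m k : ℕ}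
    (h : ReflTransGen c.Step (p, m) (p, k)) : m ≤ k := by
  by_contra! hkm
  exact hirr _ (TransGen.tail' h (Or.inl ⟨rfl, hkm⟩))

lemma past_mono {e e' : Fin n × ℕ} (h : ReflTransGen c.Step e e') : c.past e ⊆ c.past e' :=
  fun _ ⟨hf, hfe⟩ => ⟨hf, hfe.trans h⟩

lemma mem_past_self {e : Fin n × ℕ} (he : c.Valid e) : e ∈ c.past e :=
  ⟨he, ReflTransGen.refl⟩

namespace IsVC

variable {V : Fin n × ℕ → Fin n → ℕ} {p : Fin n} {k : ℕ}

lemma apply_pred_le (hV : c.IsVC V) (hk : 0 < k) (j : Fin n) : V (p, k - 1) j ≤ V (p, k) j := by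
  obtain ⟨hown, hnone, hsome⟩ := hV
  by_cases hjp : j = p
  · subst hjp
    rw [hown, hown]
    omega
  rcases hs : c.src p k with _ | ⟨q, m⟩
  · rw [hnone p k j hjp hs, if_neg hk.ne']
  · rw [hsome p k j q m hjp hs, if_neg hk.ne']
    exact le_max_left _ _

lemma apply_src_le (hV : c.IsVC V) {j : Fin n} (hjp : j ≠ p) {s : Fin n × ℕ}
    (hs : c.src p k = some s) : V s j ≤ V (p, k) j := by
  rw [hV.2.2 p k j s.1 s.2 hjp hs]
  exact le_max_right _ _

lemma apply_cases (hV : c.IsVC V) {j : Fin n} (hjp : j ≠ p) :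
    V (p, k) j = 0 ∨ (0 < k ∧ V (p, k) j = V (p, k - 1) j) ∨
      ∃ s, c.src p k = some s ∧ V (p, k) j = V s j := by
  have hprev : (if k = 0 then 0 else V (p, k - 1) j) = 0 ∨
      (0 < k ∧ (if k = 0 then 0 else V (p, k - 1) j) = V (p, k - 1) j) := by
    rcases Nat.eq_zero_or_pos k with rfl | hk
    · exact Or.inl (if_pos rfl)
    · exact Or.inr ⟨hk, if_neg hk.ne'⟩
  rcases hs : c.src p k with _ | ⟨q, m⟩
  · rw [hV.2.1 p k j hjp hs]
    tauto
  · rw [hV.2.2 p k j q m hjp hs]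
    rcases max_choice (if k = 0 then 0 else V (p, k - 1) j) (V (q, m) j) with h | h <;> rw [h]
    · tauto
    · exact Or.inr (Or.inr ⟨_, rfl, rfl⟩)

lemma isGreatest_own (hV : c.IsVC V) (hirr : ∀ e, ¬ c.hb e e) (he : c.Valid (p, k)) :
    IsGreatest ((contribution · p) '' c.past (p, k)) (V (p, k) p) := by
  rw [hV.1]
  refine ⟨⟨_, mem_past_self he, by simp [contribution]⟩, ?_⟩
  rintro _ ⟨⟨q, m⟩, ⟨-, hf⟩, rfl⟩
  by_cases hq : q = p
  · subst hq
    simpa [contribution] using le_of_reflTransGen_step hirr hf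
  · simp [contribution, Ne.symm hq]

lemma isGreatest_of_ne (hV : c.IsVC V) {j : Fin n} (hjp : j ≠ p) (he : c.Valid (p, k))
    (ih_pred : 0 < k → IsGreatest ((contribution · j) '' c.past (p, k - 1)) (V (p, k - 1) j))
    (ih_src : ∀ s, c.src p k = some s → IsGreatest ((contribution · j) '' c.past s) (V s j)) :
    IsGreatest ((contribution · j) '' c.past (p, k)) (V (p, k) j) := by
  constructor
  · rcases hV.apply_cases hjp with h | ⟨hk, h⟩ | ⟨s, hs, h⟩ <;> rw [h]
    · exact ⟨_, mem_past_self he, by simp [contribution, hjp]⟩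
    · exact Set.image_mono (past_mono (hb_pred hk).to_reflTransGen) (ih_pred hk).1
    · exact Set.image_mono (past_mono (hb_of_src hs).to_reflTransGen) (ih_src s hs).1
  · rintro _ ⟨f, ⟨hf, hfe⟩, rfl⟩
    rcases reflTransGen_step_cases hfe with rfl | ⟨hk, hfe'⟩ | ⟨s, hs, hfe'⟩
    · simp [contribution, hjp]
    · exact ((ih_pred hk).2 ⟨f, ⟨hf, hfe'⟩, rfl⟩).trans (hV.apply_pred_le hk j)
    · exact ((ih_src s hs).2 ⟨f, ⟨hf, hfe'⟩, rfl⟩).trans (hV.apply_src_le hjp hs)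

theorem isGreatest (hV : c.IsVC V) (hM : c.Matched) (hirr : ∀ e, ¬ c.hb e e)
    {e : Fin n × ℕ} (he : c.Valid e) (j : Fin n) :
    IsGreatest ((contribution · j) '' c.past e) (V e j) := by
  refine (wellFoundedOn_hb hirr).induction he
    (P := fun e => IsGreatest ((contribution · j) '' c.past e) (V e j)) ?_
  rintro ⟨p, k⟩ he ih
  by_cases hjp : j = p
  · subst hjp
    exact hV.isGreatest_own hirr he
  refine hV.isGreatest_of_ne hjp he (fun hk => ih _ he.pred (hb_pred hk)) fun s hs => ?_
  exact ih s (hM p k s.1 s.2 hs).2 (hb_of_src hs)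

end IsVC

end Comp

/-- Componentwise max on `ℕ^n` is associative, commutative, idempotent and
monotone in each argument; consequently the vector clock of an event is the
componentwise supremum of the unit contribution vectors of all events in its
causal past (event `(q, m)` contributes `m + 1` in component `q`). -/
theorem componentwise_max_lattice_and_vc_as_sup :
    (∀ (n : ℕ) (u v w : Fin n → ℕ),
       ((fun i => max (max (u i) (v i)) (w i)) =
          fun i => max (u i) (max (v i) (w i))) ∧
       ((fun i => max (u i) (v i)) = fun i => max (v i) (u i)) ∧
       ((fun i => max (u i) (u i)) = u) ∧
       ((∀ i, u i ≤ v i) → ∀ i, max (u i) (w i) ≤ max (v i) (w i)) ∧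
       ((∀ i, u i ≤ v i) → ∀ i, max (w i) (u i) ≤ max (w i) (v i))) ∧
    (∀ (n : ℕ) (c : Comp n) (V : Fin n × ℕ → Fin n → ℕ),
       c.IsVC V → c.Matched → (∀ e, ¬ c.hb e e) →
       ∀ p k, c.Valid (p, k) → ∀ j,
         V (p, k) j = sSup {x : ℕ | ∃ q m, c.Valid (q, m) ∧
           (c.hb (q, m) (p, k) ∨ (q, m) = (p, k)) ∧
           x = (if j = q then m + 1 else 0)}) := by
  refine ⟨fun n u v w => ⟨funext fun i => max_assoc _ _ _, funext fun i => max_comm _ _,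
    funext fun i => max_self _, fun h i => max_le_max (h i) le_rfl,
    fun h i => max_le_max le_rfl (h i)⟩, ?_⟩
  intro n c V hV hM hirr p k he j
  have hset : {x : ℕ | ∃ q m, c.Valid (q, m) ∧ (c.hb (q, m) (p, k) ∨ (q, m) = (p, k)) ∧
      x = (if j = q then m + 1 else 0)} = (Comp.contribution · j) '' c.past (p, k) := by
    ext x
    simp [Comp.past, Comp.contribution, Pi.single_apply, Comp.hb,
      Relation.reflTransGen_iff_eq_or_transGen, or_comm, eq_comm, and_assoc]
  rw [hset, (hV.isGreatest hM hirr he j).csSup_eq]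
end

section
/- If every pair of conflicting accesses (same location, at least one write) in a computation is ordered by happens-before, then every linearization (topological sort) of the happens-before order yields the same final value at each memory location. -/
/-- `r` is a linear extension (topological sort, as a reflexive total order)
of the strict partial order `hb`. -/
def IsLinearExt {E : Type*} (hb r : E → E → Prop) : Prop :=
  (∀ e e', hb e e' → r e e') ∧
  (∀ e, r e e) ∧
  (∀ e e', r e e' ∨ r e' e) ∧
  (∀ e e', r e e' → r e' e → e = e') ∧
  (∀ e e' e'', r e e' → r e' e'' → r e e'')

/-- `w` is the last write to location `l` in the execution order `r`. -/
def IsLastWrite {E L : Type*} (loc : E → L) (isWrite : E → Prop)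
    (r : E → E → Prop) (l : L) (w : E) : Prop :=
  isWrite w ∧ loc w = l ∧ ∀ w', isWrite w' → loc w' = l → r w' w

/-!
In any linearization, the last write `w` to `l` is `→`-ordered with every other write
`w'` to `l` by race-freedom, and `w → w'` would put `w'` after `w`; so every other write
happens-before `w`. Thus `w` is the `→`-greatest write to `l`, which
does not depend on the linearization.
-/

section

variable {E L : Type*} {hb r r₁ r₂ : E → E → Prop} {loc : E → L} {isWrite : E → Prop}
  {l : L} {w w₁ w₂ : E}

theorem IsLinearExt.rel_of_hb (h : IsLinearExt hb r) {a b : E} (hab : hb a b) : r a b :=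
  h.1 a b hab

theorem IsLinearExt.antisymm (h : IsLinearExt hb r) {a b : E} (hab : r a b) (hba : r b a) :
    a = b :=
  h.2.2.2.1 a b hab hba

theorem IsLastWrite.hb_of_ne (hr : IsLinearExt hb r)
    (hww : ∀ e e', isWrite e → isWrite e' → loc e = loc e' → e ≠ e' → hb e e' ∨ hb e' e)
    (hw : IsLastWrite loc isWrite r l w) {w' : E} (hw' : isWrite w') (hl : loc w' = l)
    (hne : w' ≠ w) : hb w' w := by
  obtain ⟨hw_write, hw_loc, hw_last⟩ := hw
  refine (hww w' w hw' hw_write (hl.trans hw_loc.symm) hne).resolve_right fun hb_ww' => ?_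
  exact hne (hr.antisymm (hw_last w' hw' hl) (hr.rel_of_hb hb_ww'))

theorem IsLastWrite.eq_of_isLinearExt (h₁ : IsLinearExt hb r₁) (h₂ : IsLinearExt hb r₂)
    (hww : ∀ e e', isWrite e → isWrite e' → loc e = loc e' → e ≠ e' → hb e e' ∨ hb e' e)
    (hw₁ : IsLastWrite loc isWrite r₁ l w₁) (hw₂ : IsLastWrite loc isWrite r₂ l w₂) :
    w₁ = w₂ := by
  by_contra hne
  have hb₂₁ : hb w₂ w₁ := hw₁.hb_of_ne h₁ hww hw₂.1 hw₂.2.1 (Ne.symm hne)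
  exact hne (h₂.antisymm (hw₂.2.2 w₁ hw₁.1 hw₁.2.1) (h₂.rel_of_hb hb₂₁))

end

theorem raceFree_deterministic_final_values_general {E L Val : Type*}
    (hb : E → E → Prop)
    (loc : E → L) (isWrite : E → Prop) (val : E → Val)
    (hrf : ∀ e e', loc e = loc e' → (isWrite e ∨ isWrite e') → e ≠ e' →
        hb e e' ∨ hb e' e)
    (r₁ r₂ : E → E → Prop)
    (h₁ : IsLinearExt hb r₁) (h₂ : IsLinearExt hb r₂)
    (l : L) (w₁ w₂ : E)
    (hw₁ : IsLastWrite loc isWrite r₁ l w₁)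
    (hw₂ : IsLastWrite loc isWrite r₂ l w₂) :
    val w₁ = val w₂ :=
  congrArg val <| hw₁.eq_of_isLinearExt h₁ h₂
    (fun e e' he _ hl hne => hrf e e' hl (Or.inl he) hne) hw₂

/-- **Race-freedom implies determinacy**: if every pair of conflicting
accesses (same location, at least one write) is ordered by happens-before,
then every linearization of happens-before yields the same final value at
each memory location (the value of the last write to it). -/
theorem raceFree_deterministic_final_values {E L Val : Type*} [Finite E]
    (hb : E → E → Prop)
    (hirr : ∀ e, ¬ hb e e)
    (htrans : ∀ a b c, hb a b → hb b c → hb a c)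
    (loc : E → L) (isWrite : E → Prop) (val : E → Val)
    (hrf : ∀ e e', loc e = loc e' → (isWrite e ∨ isWrite e') → e ≠ e' →
        hb e e' ∨ hb e' e)
    (r₁ r₂ : E → E → Prop)
    (h₁ : IsLinearExt hb r₁) (h₂ : IsLinearExt hb r₂)
    (l : L) (w₁ w₂ : E)
    (hw₁ : IsLastWrite loc isWrite r₁ l w₁)
    (hw₂ : IsLastWrite loc isWrite r₂ l w₂) :
    val w₁ = val w₂ :=
  raceFree_deterministic_final_values_general hb loc isWrite val hrf r₁ r₂ h₁ h₂ l w₁ w₂ hw₁ hw₂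
end
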